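/- Let M, N : [a,b] × ℝⁿ → vec be free persistence modules of finite rank. Then the vertical bottleneck distance between their barcodes satisfies d_B^{1₀}(B(M), B(N)) ≤ (n−1) · d_I^{1₀}(M, N) if n > 1, and d_B^{1₀}(B(M), B(N)) ≤ d_I^{1₀}(M, N) if n = 1. -/

import Mathlib

/-!
An interleaving of free modules is a pair of morphisms, and a morphism between free modules is
a matrix whose `(j, i)` entry can be nonzero only if the `j`-th generator lies below the `i`-th
one shifted by `ε·1₀`; the interleaving identities make the two matrices `F`, `G` mutually
inverse, so both barcodes have the same size. Order the generators lexicographically by their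
first coordinate and then by the sum of their vertical coordinates. Hall's condition holds for
the relation "`F j i ≠ 0` and `cᵢ ≤ dⱼ` in this order, or `G i j ≠ 0` and `dⱼ ≤ cᵢ`": for a set
`A` of generators with neighbourhood `B`, restricting `G F = 1` factors `1 - S` through `B`,
where `S` only involves entries outside `B` and is therefore strictly triangular for the order,
so `|A| ≤ |B|`. In a matched pair `d ≤ c + ε·1₀` and `c ≤ d` in the order force equal first
coordinates, and comparing the vertical sums gives `c ≤ d + (n - 1)ε·1₀`; matched interval
modules are therefore `max(1, n - 1)·ε`-interleaved.
-/

open CategoryTheory CategoryTheory.Limits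
open scoped ENNReal

/-- The poset `[a,b] × ℝⁿ` (product order), viewed as a thin category. -/
def Slab (a b : ℝ) (n : ℕ) : Type := Set.Icc a b × (Fin n → ℝ)

instance (a b : ℝ) (n : ℕ) : Preorder (Slab a b n) :=
  inferInstanceAs (Preorder (Set.Icc a b × (Fin n → ℝ)))

variable {a b : ℝ} {n : ℕ}

/-- The vertical shift by `ε·1₀`, `1₀ = (0,1,…,1)`: `(s, x) ↦ (s, x + ε·1)`. -/
def vshift (ε : ℝ) (p : Slab a b n) : Slab a b n := (p.1, fun i => p.2 i + ε)

lemma vshift_monotone (ε : ℝ) : Monotone (vshift (a := a) (b := b) (n := n) ε) :=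
  fun _ _ h => Prod.le_def.mpr ⟨(Prod.le_def.mp h).1,
    fun i => (add_le_add_iff_right ε).mpr ((Prod.le_def.mp h).2 i)⟩

/-- The vertical `ε·1₀`-shift functor on `[a,b] × ℝⁿ`. -/
def vshiftFunctor (a b : ℝ) (n : ℕ) (ε : ℝ) : Slab a b n ⥤ Slab a b n :=
  Monotone.functor (vshift_monotone ε)

variable (K : Type) [Field K]

/-- Persistence modules over `[a,b] × ℝⁿ`. -/
abbrev SlabMod (a b : ℝ) (n : ℕ) (K : Type) [Field K] := Slab a b n ⥤ ModuleCat K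

/-- Vertical `ε`-interleaving (i.e. `ε·1₀`-interleaving, `1₀ = (0,1,…,1)`) between two
persistence modules over `[a,b] × ℝⁿ`. -/
def VertInterleaved (ε : ℝ) (M N : SlabMod a b n K) : Prop :=
  ∃ (f : M ⟶ vshiftFunctor a b n ε ⋙ N) (g : N ⟶ vshiftFunctor a b n ε ⋙ M),
    (∀ (p : Slab a b n) (h : p ≤ vshift ε (vshift ε p)),
        f.app p ≫ g.app (vshift ε p) = M.map (homOfLE h)) ∧
    (∀ (p : Slab a b n) (h : p ≤ vshift ε (vshift ε p)),
        g.app p ≫ f.app (vshift ε p) = N.map (homOfLE h))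

/-- The vertical interleaving distance `d_I^{1₀}`. -/
noncomputable def vertInterleavingDist (M N : SlabMod a b n K) : ℝ≥0∞ :=
  sInf {e : ℝ≥0∞ | ∃ ε : ℝ, 0 ≤ ε ∧ e = ENNReal.ofReal ε ∧ VertInterleaved K ε M N}

/-- The free interval (principal upset) generated by `c`, at the level of types:
`p ↦ PLift (c ≤ p)`. -/
def upFunctor (c : Slab a b n) : Slab a b n ⥤ Type where
  obj p := PLift (c ≤ p)
  map h := TypeCat.ofHom fun t => ⟨t.down.trans (leOfHom h)⟩
  map_id _ := rfl
  map_comp _ _ := rfl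

/-- The interval module `k^J` on the free interval `J = [c, ∞)` (within `[a,b] × ℝⁿ`,
a free interval `[x₀,b] × [x₁,∞) × ⋯ × [xₙ,∞)` is exactly the principal upset of a point). -/
noncomputable def upMod (c : Slab a b n) : SlabMod a b n K :=
  upFunctor c ⋙ ModuleCat.free K

/-- The free persistence module with one generator at `gen i` for each `i`. -/
noncomputable def freeMod {ι : Type} (gen : ι → Slab a b n) : SlabMod a b n K :=
  (show Slab a b n ⥤ Type from
    { obj := fun p => Σ i : ι, PLift (gen i ≤ p)
      map := fun h => TypeCat.ofHom fun t => ⟨t.1, ⟨t.2.down.trans (leOfHom h)⟩⟩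
      map_id := fun _ => rfl
      map_comp := fun _ _ => rfl }) ⋙ ModuleCat.free K

/-- The zero persistence module. -/
noncomputable def zeroMod : SlabMod a b n K :=
  (CategoryTheory.Functor.const (Slab a b n)).obj (ModuleCat.of K PUnit)

/-- A vertical `ε·1₀`-bottleneck matching between two multisets of free intervals, given by
families of generators `cB : ι → [a,b]×ℝⁿ` and `cC : κ → [a,b]×ℝⁿ`: a bijection between
subsets matching intervals whose interval modules are vertically `ε`-interleaved, all
unmatched intervals having interval modules vertically `ε`-interleaved with `0`. -/
def BottleneckMatch (ε : ℝ) {ι κ : Type} (cB : ι → Slab a b n) (cC : κ → Slab a b n) : Prop :=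
  ∃ (s : Set ι) (t : Set κ) (e : s ≃ t),
    (∀ i : s, VertInterleaved K ε (upMod K (cB i)) (upMod K (cC (e i)))) ∧
    (∀ i : ι, i ∉ s → VertInterleaved K ε (upMod K (cB i)) (zeroMod K)) ∧
    (∀ j : κ, j ∉ t → VertInterleaved K ε (upMod K (cC j)) (zeroMod K))

/-- The vertical bottleneck distance `d_B^{1₀}` between two barcodes of free intervals. -/
noncomputable def vertBottleneckDist {ι κ : Type} (cB : ι → Slab a b n)
    (cC : κ → Slab a b n) : ℝ≥0∞ :=
  sInf {e : ℝ≥0∞ | ∃ ε : ℝ, 0 ≤ ε ∧ e = ENNReal.ofReal ε ∧ BottleneckMatch K ε cB cC}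


namespace Matrix

variable {R : Type*} [CommRing R] {ι κ : Type*}

theorem card_le_card_of_isUnit_mul [Fintype ι] [Fintype κ] [StrongRankCondition R]
    [DecidableEq ι] (Q : Matrix ι κ R) (P : Matrix κ ι R) (h : IsUnit (Q * P)) :
    Fintype.card ι ≤ Fintype.card κ :=
  calc Fintype.card ι = (Q * P).rank := (rank_of_isUnit _ h).symm
    _ ≤ Q.rank := rank_mul_le_left _ _
    _ ≤ Fintype.card κ := rank_le_card_width _

theorem det_one_sub_eq_one_of_lt [Fintype ι] [DecidableEq ι] {L : Type*} [LinearOrder L]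
    (S : Matrix ι ι R) (r : ι → L) (hS : ∀ i j, S i j ≠ 0 → r i < r j) :
    (1 - S).det = 1 := by
  have hdiag : ∀ i j, r i = r j → S i j = 0 := fun i j h =>
    by_contra fun hne => (hS i j hne).ne h
  have htri : (1 - S).BlockTriangular r := fun i j hji => by
    rw [sub_apply, one_apply_ne (fun hij => hji.ne (by rw [hij])),
      not_imp_comm.mp (hS i j) (asymm hji), sub_zero]
  rw [htri.det]
  refine Finset.prod_eq_one fun k _ => ?_
  suffices (1 - S).toSquareBlock r k = 1 by rw [this, det_one]
  ext ⟨i, hi⟩ ⟨j, hj⟩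
  simp [toSquareBlock_def, one_apply, hdiag i j (hi.trans hj.symm)]

theorem submatrix_mul_submatrix_eq_one_sub [Fintype κ] [DecidableEq ι] [DecidableEq κ]
    {G : Matrix ι κ R} {F : Matrix κ ι R} (hGF : G * F = 1) (A : Finset ι) (B : Finset κ) :
    G.submatrix ((↑) : A → ι) ((↑) : B → κ) * F.submatrix ((↑) : B → κ) ((↑) : A → ι) =
      1 - of fun i' i : A => ∑ j ∈ Bᶜ, G i' j * F j i := by
  refine Matrix.ext fun i' i => ?_
  have hsplit := congrFun (congrFun hGF i') i
  rw [mul_apply, ← Finset.sum_add_sum_compl B] at hsplit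
  have hone : (1 : Matrix A A R) i' i = (1 : Matrix ι ι R) i' i :=
    (congrFun (congrFun (submatrix_one _ Subtype.val_injective) i') i).symm
  rw [sub_apply, hone, ← hsplit, mul_apply]
  exact (Finset.sum_coe_sort B fun j => G i' j * F j i).trans (add_sub_cancel_right _ _).symm

theorem exists_injective_of_mul_eq_one [Fintype κ] [StrongRankCondition R] [DecidableEq ι]
    {L : Type*} [LinearOrder L] {G : Matrix ι κ R} {F : Matrix κ ι R} (hGF : G * F = 1)
    (r : ι → L) (s : κ → L) :
    ∃ m : ι → κ, Function.Injective m ∧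
      ∀ i, (F (m i) i ≠ 0 ∧ r i ≤ s (m i)) ∨ (G i (m i) ≠ 0 ∧ s (m i) ≤ r i) := by
  classical
  refine (Fintype.all_card_le_filter_rel_iff_exists_injective
    fun i j => (F j i ≠ 0 ∧ r i ≤ s j) ∨ (G i j ≠ 0 ∧ s j ≤ r i)).mp fun A => ?_
  set B : Finset κ := {j | ∃ i ∈ A, (F j i ≠ 0 ∧ r i ≤ s j) ∨ (G i j ≠ 0 ∧ s j ≤ r i)}
  have hB : ∀ j ∉ B, ∀ i ∈ A, (F j i ≠ 0 → s j < r i) ∧ (G i j ≠ 0 → r i < s j) := by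
    intro j hj i hi
    have hrel := fun h => hj (Finset.mem_filter.mpr ⟨Finset.mem_univ j, i, hi, h⟩)
    exact ⟨fun hF => not_le.mp fun h => hrel (.inl ⟨hF, h⟩),
      fun hG => not_le.mp fun h => hrel (.inr ⟨hG, h⟩)⟩
  let S : Matrix A A R := of fun i' i => ∑ j ∈ Bᶜ, G i' j * F j i
  have hS : ∀ i' i, S i' i ≠ 0 → r i' < r i := by
    intro i' i hne
    obtain ⟨j, hj, hprod⟩ := Finset.exists_ne_zero_of_sum_ne_zero hne
    exact ((hB j (Finset.mem_compl.mp hj) i' i'.2).2 (left_ne_zero_of_mul hprod)).trans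
      ((hB j (Finset.mem_compl.mp hj) i i.2).1 (right_ne_zero_of_mul hprod))
  have hunit : IsUnit (1 - S) := by
    rw [isUnit_iff_isUnit_det, det_one_sub_eq_one_of_lt S _ hS]
    exact isUnit_one
  have hcard := card_le_card_of_isUnit_mul _ _
    ((submatrix_mul_submatrix_eq_one_sub hGF A B).symm ▸ hunit)
  rwa [Fintype.card_coe, Fintype.card_coe] at hcard

end Matrix

lemma ENNReal.sInf_ofReal_le_natCast_mul {P Q : ℝ → Prop} {k : ℕ} (hk : k ≠ 0)
    (h : ∀ ε, 0 ≤ ε → P ε → Q (k * ε)) :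
    sInf {e : ℝ≥0∞ | ∃ ε : ℝ, 0 ≤ ε ∧ e = ENNReal.ofReal ε ∧ Q ε} ≤
      k * sInf {e : ℝ≥0∞ | ∃ ε : ℝ, 0 ≤ ε ∧ e = ENNReal.ofReal ε ∧ P ε} := by
  have hk₀ : (k : ℝ≥0∞) ≠ 0 := by exact_mod_cast hk
  conv_rhs => rw [sInf_eq_iInf, ENNReal.mul_iInf_of_ne hk₀ (ENNReal.natCast_ne_top k)]
  refine le_iInf fun e => ?_
  rw [ENNReal.mul_iInf_of_ne hk₀ (ENNReal.natCast_ne_top k)]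
  refine le_iInf fun ⟨ε, hε, he, hP⟩ => sInf_le ⟨k * ε, by positivity, ?_, h ε hε hP⟩
  rw [he, ENNReal.ofReal_mul (Nat.cast_nonneg k), ENNReal.ofReal_natCast]


lemma vshift_le_vshift {ε δ : ℝ} (h : ε ≤ δ) (p : Slab a b n) : vshift ε p ≤ vshift δ p :=
  Prod.le_def.mpr ⟨le_rfl, fun i => add_le_add_right h (p.2 i)⟩

lemma le_vshift_vshift {ε : ℝ} (hε : 0 ≤ ε) (p : Slab a b n) : p ≤ vshift ε (vshift ε p) :=
  Prod.le_def.mpr ⟨le_rfl, fun i => by simp only [vshift]; linarith⟩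

def slabRank (p : Slab a b n) : ℝ ×ₗ ℝ := toLex ((p.1 : ℝ), ∑ k, p.2 k)

lemma le_vshift_of_le_vshift_of_slabRank_le {ε : ℝ} {c d : Slab a b n} (h : d ≤ vshift ε c)
    (hr : slabRank c ≤ slabRank d) : c ≤ vshift ((n - 1 : ℕ) * ε) d := by
  obtain ⟨h₁, h₂⟩ := Prod.le_def.mp h
  obtain hlt | ⟨heq, hsum⟩ := Prod.Lex.le_iff.mp hr
  · exact absurd hlt (not_lt.mpr h₁)
  refine Prod.le_def.mpr ⟨Subtype.coe_le_coe.mp heq.le, fun k => ?_⟩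
  have hrest : ∑ m ∈ Finset.univ.erase k, (d.2 m - c.2 m) ≤ (n - 1 : ℕ) * ε := by
    have := Finset.sum_le_card_nsmul (Finset.univ.erase k) (fun m => d.2 m - c.2 m) ε
      fun m _ => by have := h₂ m; simp only [vshift] at this; linarith
    rwa [Finset.card_erase_of_mem (Finset.mem_univ k), Finset.card_univ, Fintype.card_fin,
      nsmul_eq_mul] at this
  have hsum' : ∑ m, c.2 m ≤ ∑ m, d.2 m := hsum
  rw [← Finset.add_sum_erase _ _ (Finset.mem_univ k),
    ← Finset.add_sum_erase _ _ (Finset.mem_univ k)] at hsum'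
  rw [Finset.sum_sub_distrib] at hrest
  simp only [vshift]
  linarith

lemma VertInterleaved.symm {ε : ℝ} {M N : SlabMod a b n K} (h : VertInterleaved K ε M N) :
    VertInterleaved K ε N M :=
  let ⟨f, g, hfg, hgf⟩ := h
  ⟨g, f, hgf, hfg⟩

lemma VertInterleaved.of_iso {ε : ℝ} {M M' N N' : SlabMod a b n K}
    (h : VertInterleaved K ε M N) (eM : M ≅ M') (eN : N ≅ N') :
    VertInterleaved K ε M' N' := by
  obtain ⟨f, g, hfg, hgf⟩ := h
  refine ⟨eM.inv ≫ f ≫ Functor.whiskerLeft (vshiftFunctor a b n ε) eN.hom,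
    eN.inv ≫ g ≫ Functor.whiskerLeft (vshiftFunctor a b n ε) eM.hom,
    fun p hp => ?_, fun p hp => ?_⟩
  · simp only [NatTrans.comp_app, Functor.whiskerLeft_app]
    erw [Category.assoc, Category.assoc, Iso.hom_inv_id_app_assoc, reassoc_of% (hfg p hp),
      eM.hom.naturality, Iso.inv_hom_id_app_assoc]
  · simp only [NatTrans.comp_app, Functor.whiskerLeft_app]
    erw [Category.assoc, Category.assoc, Iso.hom_inv_id_app_assoc, reassoc_of% (hgf p hp),
      eN.hom.naturality, Iso.inv_hom_id_app_assoc]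

lemma upFunctor_hom_ext {X : Type} {c p : Slab a b n} (u v : X ⟶ (upFunctor c).obj p) : u = v :=
  TypeCat.homEquiv.injective (funext fun _ => Subsingleton.elim (α := PLift (c ≤ p)) _ _)

def upFunctorShift {δ : ℝ} {c d : Slab a b n} (h : d ≤ vshift δ c) :
    upFunctor c ⟶ vshiftFunctor a b n δ ⋙ upFunctor d where
  app _ := TypeCat.ofHom fun t => ⟨h.trans (vshift_monotone δ t.down)⟩
  naturality _ _ _ := upFunctor_hom_ext _ _

lemma upFunctorShift_comp {δ : ℝ} {c d : Slab a b n} (hdc : d ≤ vshift δ c)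
    (hcd : c ≤ vshift δ d) (p : Slab a b n) (h : p ≤ vshift δ (vshift δ p)) :
    (upFunctorShift hdc).app p ≫ (upFunctorShift hcd).app (vshift δ p) =
      (upFunctor c).map (homOfLE h) :=
  upFunctor_hom_ext _ _

lemma upMod_vertInterleaved {δ : ℝ} {c d : Slab a b n}
    (hdc : d ≤ vshift δ c) (hcd : c ≤ vshift δ d) :
    VertInterleaved K δ (upMod K c) (upMod K d) :=
  ⟨Functor.whiskerRight (upFunctorShift hdc) (ModuleCat.free K),
    Functor.whiskerRight (upFunctorShift hcd) (ModuleCat.free K),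
    fun p h => ((ModuleCat.free K).map_comp _ _).symm.trans
      (congrArg _ (upFunctorShift_comp hdc hcd p h)),
    fun p h => ((ModuleCat.free K).map_comp _ _).symm.trans
      (congrArg _ (upFunctorShift_comp hcd hdc p h))⟩

lemma upMod_vertInterleaved_of_le_vshift {ε : ℝ} (hε : 0 ≤ ε) {c d : Slab a b n}
    (h : d ≤ vshift ε c) (hr : slabRank c ≤ slabRank d) :
    VertInterleaved K ((max 1 (n - 1) : ℕ) * ε) (upMod K c) (upMod K d) :=
  upMod_vertInterleaved K
    (h.trans (vshift_le_vshift (le_mul_of_one_le_left hε (by exact_mod_cast le_max_left _ _)) c))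
    ((le_vshift_of_le_vshift_of_slabRank_le h hr).trans
      (vshift_le_vshift (mul_le_mul_of_nonneg_right (by exact_mod_cast le_max_right _ _) hε) d))

namespace freeMod

open ModuleCat Matrix

variable {ι : Type} {c : ι → Slab a b n} {p q : Slab a b n}

noncomputable def gen (i : ι) (h : c i ≤ p) : (freeMod K c).obj p :=
  freeMk (⟨i, ⟨h⟩⟩ : Σ i, PLift (c i ≤ p))

noncomputable def coeffs [DecidableEq ι] : (freeMod K c).obj p ⟶ ModuleCat.of K (ι → K) :=
  freeDesc (TypeCat.ofHom fun t : Σ i, PLift (c i ≤ p) => Pi.single t.1 1)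

lemma map_gen (u : p ⟶ q) (i : ι) (h : c i ≤ p) :
    (freeMod K c).map u (gen K i h) = gen K i (h.trans (leOfHom u)) :=
  free_map_apply _ _

lemma coeffs_gen [DecidableEq ι] (i : ι) (h : c i ≤ p) :
    coeffs K (gen K i h) = Pi.single i 1 :=
  freeDesc_apply _ _

lemma coeffs_map [DecidableEq ι] (u : p ⟶ q) :
    (freeMod K c).map u ≫ coeffs K = coeffs K := by
  refine free_hom_ext (X := Σ i, PLift (c i ≤ p)) fun ⟨i, ⟨h⟩⟩ => ?_
  change coeffs K ((freeMod K c).map u (gen K i h)) = coeffs K (gen K i h)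
  rw [map_gen, coeffs_gen, coeffs_gen]

lemma coeffs_map_apply [DecidableEq ι] (u : p ⟶ q) (x : (freeMod K c).obj p) :
    coeffs K ((freeMod K c).map u x) = coeffs K x :=
  ConcreteCategory.congr_hom (coeffs_map K u) x

lemma le_of_coeffs_ne_zero [DecidableEq ι] {x : (freeMod K c).obj p} {j : ι}
    (h : coeffs K x j ≠ 0) : c j ≤ p := by
  by_contra hj
  have hzero : coeffs K ≫ ofHom (LinearMap.proj j) = (0 : (freeMod K c).obj p ⟶ of K K) := by
    refine free_hom_ext (X := Σ i, PLift (c i ≤ p)) fun ⟨i, ⟨hi⟩⟩ => ?_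
    change coeffs K (gen K i hi) j = 0
    rw [coeffs_gen, Pi.single_apply, if_neg (fun hji : j = i => hj (hji ▸ hi))]
  exact h (ConcreteCategory.congr_hom hzero x)

variable {ι₂ : Type} [DecidableEq ι₂] {c₂ : ι₂ → Slab a b n} {S : Slab a b n ⥤ Slab a b n}

noncomputable def toMatrix (f : freeMod K c ⟶ S ⋙ freeMod K c₂) : Matrix ι₂ ι K :=
  Matrix.of fun j i => coeffs K (f.app (c i) (gen K i le_rfl)) j

variable (f : freeMod K c ⟶ S ⋙ freeMod K c₂)

lemma le_of_toMatrix_ne_zero {i : ι} {j : ι₂} (h : toMatrix K f j i ≠ 0) : c₂ j ≤ S.obj (c i) :=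
  le_of_coeffs_ne_zero K h

lemma coeffs_app_gen {i : ι} (h : c i ≤ p) :
    coeffs K (f.app p (gen K i h)) = (toMatrix K f).col i := by
  have hgen : gen K i h = (freeMod K c).map (homOfLE h) (gen K i le_rfl) := (map_gen K _ i _).symm
  rw [hgen, NatTrans.naturality_apply]
  exact coeffs_map_apply K _ _

lemma coeffs_app [Fintype ι] [DecidableEq ι] (x : (freeMod K c).obj p) :
    coeffs K (f.app p x) = toMatrix K f *ᵥ coeffs K x := by
  have hhom : f.app p ≫ coeffs K = coeffs K ≫ ofHom (toMatrix K f).mulVecLin := by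
    refine free_hom_ext (X := Σ i, PLift (c i ≤ p)) fun ⟨i, ⟨hi⟩⟩ => ?_
    change coeffs K (f.app p (gen K i hi)) = toMatrix K f *ᵥ coeffs K (gen K i hi)
    rw [coeffs_app_gen, coeffs_gen, Matrix.mulVec_single_one]
  exact ConcreteCategory.congr_hom hhom x

lemma toMatrix_mul_toMatrix [DecidableEq ι] [Fintype ι₂] (hS : ∀ p, p ≤ S.obj (S.obj p))
    (g : freeMod K c₂ ⟶ S ⋙ freeMod K c)
    (hgf : ∀ (p : Slab a b n) (h : p ≤ S.obj (S.obj p)),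
      f.app p ≫ g.app (S.obj p) = (freeMod K c).map (homOfLE h)) :
    toMatrix K g * toMatrix K f = 1 := by
  ext i' i
  have hcol : (toMatrix K g * toMatrix K f).col i = Pi.single i 1 := by
    calc (toMatrix K g * toMatrix K f).col i
        = coeffs K (g.app _ (f.app (c i) (gen K i le_rfl))) := by
          rw [coeffs_app, coeffs_app_gen]; rfl
      _ = coeffs K ((freeMod K c).map (homOfLE (hS (c i))) (gen K i le_rfl)) := by
          rw [← hgf]; rfl
      _ = Pi.single i 1 := by rw [coeffs_map_apply, coeffs_gen]
  simpa [Matrix.one_apply, Pi.single_apply] using congrFun hcol i'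

end freeMod

open Matrix in
lemma bottleneckMatch_of_vertInterleaved {ι κ : Type} [Fintype ι] [Fintype κ]
    {cM : ι → Slab a b n} {cN : κ → Slab a b n} {ε : ℝ} (hε : 0 ≤ ε)
    (h : VertInterleaved K ε (freeMod K cM) (freeMod K cN)) :
    BottleneckMatch K ((max 1 (n - 1) : ℕ) * ε) cM cN := by
  classical
  obtain ⟨f, g, hfg, hgf⟩ := h
  have hGF := freeMod.toMatrix_mul_toMatrix K f (le_vshift_vshift hε) g hfg
  have hFG := freeMod.toMatrix_mul_toMatrix K g (le_vshift_vshift hε) f hgf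
  have hcard : Fintype.card ι = Fintype.card κ :=
    (card_le_card_of_isUnit_mul _ _ (hGF ▸ isUnit_one)).antisymm
      (card_le_card_of_isUnit_mul _ _ (hFG ▸ isUnit_one))
  obtain ⟨m, hm_inj, hm⟩ := exists_injective_of_mul_eq_one hGF (slabRank ∘ cM) (slabRank ∘ cN)
  have hm_bij : Function.Bijective m :=
    (Fintype.bijective_iff_injective_and_card m).mpr ⟨hm_inj, hcard⟩
  refine ⟨Set.univ, Set.univ,
    (Equiv.Set.univ ι).trans ((Equiv.ofBijective m hm_bij).trans (Equiv.Set.univ κ).symm),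
    fun i => ?_, fun i hi => absurd trivial hi, fun j hj => absurd trivial hj⟩
  rcases hm i with ⟨hF, hr⟩ | ⟨hG, hr⟩
  · exact upMod_vertInterleaved_of_le_vshift K hε (freeMod.le_of_toMatrix_ne_zero K f hF) hr
  · exact (upMod_vertInterleaved_of_le_vshift K hε (freeMod.le_of_toMatrix_ne_zero K g hG) hr).symm


/-- Stability of free persistence modules under vertical interleaving: if
`M, N : [a,b] × ℝⁿ → vec` are free persistence modules of finite rank (with barcodes given
by the finite generator families `cM` and `cN`), then the vertical bottleneck distance
between their barcodes satisfies `d_B^{1₀}(B(M), B(N)) ≤ (n−1)·d_I^{1₀}(M,N)` if `n > 1`,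
and `d_B^{1₀}(B(M), B(N)) ≤ d_I^{1₀}(M,N)` if `n = 1`. -/
theorem free_module_vertical_stability (a b : ℝ) (n : ℕ) (K : Type) [Field K]
    (ι κ : Type) [Fintype ι] [Fintype κ]
    (cM : ι → Slab a b n) (cN : κ → Slab a b n)
    (M N : SlabMod a b n K)
    (hM : Nonempty (M ≅ freeMod K cM)) (hN : Nonempty (N ≅ freeMod K cN)) :
    (1 < n → vertBottleneckDist K cM cN ≤ (n - 1 : ℕ) * vertInterleavingDist K M N) ∧
    (n = 1 → vertBottleneckDist K cM cN ≤ vertInterleavingDist K M N) := by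
  obtain ⟨eM⟩ := hM
  obtain ⟨eN⟩ := hN
  have key : vertBottleneckDist K cM cN ≤ (max 1 (n - 1) : ℕ) * vertInterleavingDist K M N :=
    ENNReal.sInf_ofReal_le_natCast_mul (by omega) fun _ hε h =>
      bottleneckMatch_of_vertInterleaved K hε (h.of_iso K eM eN)
  refine ⟨fun hn => ?_, fun hn => ?_⟩
  · rwa [show max 1 (n - 1) = n - 1 by omega] at key
  · rwa [show max 1 (n - 1) = 1 by omega, Nat.cast_one, one_mul] at key
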